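/- Let W, X, A, B, C be random variables with values in finite sets. Then H(W | X, A, C) + H(W | X, B, C) ≥ H(W | X, A, B, C) + H(W | X, C) − I(A ; B | X, C), where H denotes conditional Shannon entropy and I conditional mutual information. -/
import Mathlib


/-- The probability that the finitely-valued random variable `X` (on the finite
probability space with mass function `P`) takes the value `a`. -/
noncomputable def rvDist {Ω α : Type*} [Fintype Ω] [DecidableEq α]
    (P : Ω → ℝ) (X : Ω → α) (a : α) : ℝ :=
  ∑ ω : Ω, if X ω = a then P ω else 0

/-- Shannon entropy of a finitely-valued random variable (in nats, with the
convention `0 log 0 = 0`, which holds since `Real.log 0 = 0`). -/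
noncomputable def rvEntropy {Ω α : Type*} [Fintype Ω] [Fintype α] [DecidableEq α]
    (P : Ω → ℝ) (X : Ω → α) : ℝ :=
  -∑ a : α, rvDist P X a * Real.log (rvDist P X a)

/-- Conditional Shannon entropy `H(X | Y) = H(X, Y) - H(Y)`. -/
noncomputable def rvCondEntropy {Ω α β : Type*} [Fintype Ω] [Fintype α] [Fintype β]
    [DecidableEq α] [DecidableEq β] (P : Ω → ℝ) (X : Ω → α) (Y : Ω → β) : ℝ :=
  rvEntropy P (fun ω => (X ω, Y ω)) - rvEntropy P Y

/-- Conditional mutual information `I(X ; Y | Z) = H(X|Z) + H(Y|Z) - H(X,Y|Z)`. -/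
noncomputable def rvCondMutualInfo {Ω α β γ : Type*} [Fintype Ω] [Fintype α]
    [Fintype β] [Fintype γ] [DecidableEq α] [DecidableEq β] [DecidableEq γ]
    (P : Ω → ℝ) (X : Ω → α) (Y : Ω → β) (Z : Ω → γ) : ℝ :=
  rvCondEntropy P X Z + rvCondEntropy P Y Z
    - rvCondEntropy P (fun ω => (X ω, Y ω)) Z


section Aux

lemma rvDist_nonneg {Ω α : Type*} [Fintype Ω] [DecidableEq α]
    (P : Ω → ℝ) (hP : ∀ ω, 0 ≤ P ω) (X : Ω → α) (a : α) : 0 ≤ rvDist P X a :=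
  Finset.sum_nonneg fun ω _ => by split <;> simp [hP ω]

-- termwise bound
lemma term_bound (a b c d : ℝ) (ha : 0 ≤ a) (hab : a ≤ b) (hac : a ≤ c) (had : a ≤ d) :
    a * (Real.log b + Real.log c - Real.log a - Real.log d) ≤ b * c / d - a := by
  rcases eq_or_lt_of_le ha with h0 | h0
  · rw [← h0]
    simpa using div_nonneg (mul_nonneg (ha.trans hab) (ha.trans hac)) (ha.trans had)
  · have hb : 0 < b := lt_of_lt_of_le h0 hab
    have hc : 0 < c := lt_of_lt_of_le h0 hac
    have hd : 0 < d := lt_of_lt_of_le h0 had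
    have hx : 0 < b * c / (a * d) := by positivity
    have hlog : Real.log (b * c / (a * d)) ≤ b * c / (a * d) - 1 :=
      Real.log_le_sub_one_of_pos hx
    have hre : Real.log (b * c / (a * d)) =
        Real.log b + Real.log c - Real.log a - Real.log d := by
      rw [Real.log_div (by positivity) (by positivity), Real.log_mul hb.ne' hc.ne',
        Real.log_mul h0.ne' hd.ne']
      ring
    rw [← hre]
    have := mul_le_mul_of_nonneg_left hlog h0.le
    calc a * Real.log (b * c / (a * d)) ≤ a * (b * c / (a * d) - 1) := this
      _ = b * c / d - a := by field_simp

lemma key {σV σW σU : Type*} [Fintype σV] [Fintype σW] [Fintype σU]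
    (p : σV → σW → σU → ℝ) (hp : ∀ v w u, 0 ≤ p v w u) :
    ∑ v, ∑ u, (∑ w, p v w u) * Real.log (∑ w, p v w u)
      + ∑ w, ∑ u, (∑ v, p v w u) * Real.log (∑ v, p v w u)
    ≤ ∑ v, ∑ w, ∑ u, p v w u * Real.log (p v w u)
      + ∑ u, (∑ v, ∑ w, p v w u) * Real.log (∑ v, ∑ w, p v w u) := by
  set qVU : σV → σU → ℝ := fun v u => ∑ w, p v w u with hqVU
  set qWU : σW → σU → ℝ := fun w u => ∑ v, p v w u with hqWU
  set qU : σU → ℝ := fun u => ∑ v, ∑ w, p v w u with hqU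
  -- termwise bound, summed
  have hterm : ∀ v w u, p v w u *
      (Real.log (qVU v u) + Real.log (qWU w u) - Real.log (p v w u) - Real.log (qU u))
      ≤ qVU v u * qWU w u / qU u - p v w u := by
    intro v w u
    refine term_bound _ _ _ _ (hp v w u) ?_ ?_ ?_
    · exact Finset.single_le_sum (fun w' _ => hp v w' u) (Finset.mem_univ w)
    · exact Finset.single_le_sum (fun v' _ => hp v' w u) (Finset.mem_univ v)
    · calc p v w u ≤ qVU v u :=
            Finset.single_le_sum (fun w' _ => hp v w' u) (Finset.mem_univ w)
        _ ≤ qU u := Finset.single_le_sum (fun v' _ => Finset.sum_nonneg fun w' _ => hp v' w' u)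
            (Finset.mem_univ v)
  have hsum : ∑ v, ∑ w, ∑ u, p v w u *
      (Real.log (qVU v u) + Real.log (qWU w u) - Real.log (p v w u) - Real.log (qU u))
      ≤ ∑ v, ∑ w, ∑ u, (qVU v u * qWU w u / qU u - p v w u) := by
    refine Finset.sum_le_sum fun v _ => Finset.sum_le_sum fun w _ => Finset.sum_le_sum
      fun u _ => hterm v w u
  -- rearrangement of LHS of hsum
  have hA : ∑ v, ∑ w, ∑ u, p v w u * Real.log (qVU v u)
      = ∑ v, ∑ u, qVU v u * Real.log (qVU v u) := by
    refine Finset.sum_congr rfl fun v _ => ?_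
    rw [Finset.sum_comm]
    exact Finset.sum_congr rfl fun u _ => (Finset.sum_mul _ _ _).symm
  have hB : ∑ v, ∑ w, ∑ u, p v w u * Real.log (qWU w u)
      = ∑ w, ∑ u, qWU w u * Real.log (qWU w u) := by
    rw [Finset.sum_comm]
    refine Finset.sum_congr rfl fun w _ => ?_
    rw [Finset.sum_comm]
    exact Finset.sum_congr rfl fun u _ => (Finset.sum_mul _ _ _).symm
  have hC : ∑ v, ∑ w, ∑ u, p v w u * Real.log (qU u)
      = ∑ u, qU u * Real.log (qU u) := by
    have : ∀ v, ∑ w, ∑ u, p v w u * Real.log (qU u)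
        = ∑ u, (∑ w, p v w u) * Real.log (qU u) := by
      intro v
      rw [Finset.sum_comm]
      exact Finset.sum_congr rfl fun u _ => (Finset.sum_mul _ _ _).symm
    rw [Finset.sum_congr rfl fun v _ => this v, Finset.sum_comm]
    exact Finset.sum_congr rfl fun u _ => (Finset.sum_mul _ _ _).symm
  -- rhs of hsum is ≤ 0
  have hWsum : ∀ u, ∑ w, qWU w u = qU u := fun u => Finset.sum_comm
  have hVsum : ∀ u, ∑ v, qVU v u = qU u := fun u => rfl
  have hPsum : ∑ v, ∑ w, ∑ u, p v w u = ∑ u, qU u := by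
    rw [Finset.sum_congr rfl fun v _ => (Finset.sum_comm : ∑ w, ∑ u, p v w u = ∑ u, ∑ w, p v w u), Finset.sum_comm]
  have hE : ∀ v u, ∑ w, qVU v u * qWU w u / qU u = qVU v u * qU u / qU u := by
    intro v u
    rw [← hWsum u, Finset.mul_sum, Finset.sum_div]
  have hD : ∑ v, ∑ w, ∑ u, (qVU v u * qWU w u / qU u - p v w u) ≤ 0 := by
    have h2 : ∑ v, ∑ w, ∑ u, qVU v u * qWU w u / qU u = ∑ u, qU u * qU u / qU u := by
      rw [Finset.sum_congr rfl fun v _ =>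
        (Finset.sum_comm : ∑ w, ∑ u, qVU v u * qWU w u / qU u
          = ∑ u, ∑ w, qVU v u * qWU w u / qU u)]
      rw [Finset.sum_congr rfl fun v _ => Finset.sum_congr rfl fun u _ => hE v u]
      rw [Finset.sum_comm]
      refine Finset.sum_congr rfl fun u _ => ?_
      rw [← Finset.sum_div, ← Finset.sum_mul, hVsum u]
    have h3 : ∑ u, qU u * qU u / qU u ≤ ∑ u, qU u := by
      refine Finset.sum_le_sum fun u _ => ?_
      rcases eq_or_ne (qU u) 0 with h | h
      · simp [h]
      · rw [mul_div_assoc, div_self h, mul_one]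
    simp only [Finset.sum_sub_distrib]
    rw [h2, hPsum]
    linarith
  simp only [mul_add, mul_sub, Finset.sum_add_distrib, Finset.sum_sub_distrib,
    hA, hB, hC] at hsum
  simp only [Finset.sum_sub_distrib] at hD
  show ∑ v, ∑ u, qVU v u * Real.log (qVU v u)
      + ∑ w, ∑ u, qWU w u * Real.log (qWU w u)
    ≤ ∑ v, ∑ w, ∑ u, p v w u * Real.log (p v w u)
      + ∑ u, qU u * Real.log (qU u)
  linarith

lemma rvEntropy_comp {Ω α β : Type*} [Fintype Ω] [Fintype α] [Fintype β]
    [DecidableEq α] [DecidableEq β] (P : Ω → ℝ) (e : α ≃ β) (f : Ω → α) (g : Ω → β)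
    (hg : ∀ ω, g ω = e (f ω)) : rvEntropy P g = rvEntropy P f := by
  have hg' : g = fun ω => e (f ω) := funext hg
  subst hg'
  unfold rvEntropy
  congr 1
  rw [← Equiv.sum_comp e (fun b => rvDist P (fun ω => e (f ω)) b
    * Real.log (rvDist P (fun ω => e (f ω)) b))]
  refine Finset.sum_congr rfl fun a _ => ?_
  have h : rvDist P (fun ω => e (f ω)) (e a) = rvDist P f a := by
    unfold rvDist
    exact Finset.sum_congr rfl fun ω _ => by simp
  rw [h]

lemma rvSubmod {Ω σV σW σU : Type*} [Fintype Ω] [Fintype σV] [Fintype σW]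
    [Fintype σU] [DecidableEq σV] [DecidableEq σW] [DecidableEq σU]
    (P : Ω → ℝ) (hP : ∀ ω, 0 ≤ P ω) (V : Ω → σV) (W : Ω → σW) (U : Ω → σU) :
    rvEntropy P (fun ω => (V ω, W ω, U ω)) + rvEntropy P U
      ≤ rvEntropy P (fun ω => (V ω, U ω)) + rvEntropy P (fun ω => (W ω, U ω)) := by
  set p : σV → σW → σU → ℝ :=
    fun v w u => rvDist P (fun ω => (V ω, W ω, U ω)) (v, w, u) with hp
  have m1 : ∀ v u, rvDist P (fun ω => (V ω, U ω)) (v, u) = ∑ w, p v w u := by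
    intro v u
    simp only [hp]
    unfold rvDist
    rw [Finset.sum_comm]
    refine Finset.sum_congr rfl fun ω _ => ?_
    by_cases h1 : V ω = v <;> by_cases h2 : U ω = u <;>
      simp [Prod.ext_iff, h1, h2]
  have m2 : ∀ w u, rvDist P (fun ω => (W ω, U ω)) (w, u) = ∑ v, p v w u := by
    intro w u
    simp only [hp]
    unfold rvDist
    rw [Finset.sum_comm]
    refine Finset.sum_congr rfl fun ω _ => ?_
    by_cases h1 : W ω = w <;> by_cases h2 : U ω = u <;>
      simp [Prod.ext_iff, h1, h2]
  have m3 : ∀ u, rvDist P U u = ∑ v, ∑ w, p v w u := by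
    intro u
    simp only [hp]
    unfold rvDist
    rw [Finset.sum_congr rfl fun v (_ : v ∈ Finset.univ) =>
      (Finset.sum_comm : ∑ w, ∑ ω, _ = ∑ ω, ∑ w, _), Finset.sum_comm]
    refine Finset.sum_congr rfl fun ω _ => ?_
    by_cases h2 : U ω = u <;> simp [Prod.ext_iff, h2, ite_and]
  have hkey := key p (fun v w u => rvDist_nonneg P hP _ _)
  simp only [rvEntropy, Fintype.sum_prod_type, m1, m2, m3]
  linarith

end Aux

/-- Generalized submodularity. For finitely-valued random variables
`W, X, A, B, C`,
`H(W | X,A,C) + H(W | X,B,C) ≥ H(W | X,A,B,C) + H(W | X,C) − I(A ; B | X,C)`. -/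
theorem stmt15 {Ω σW σX σA σB σC : Type*} [Fintype Ω] [Fintype σW] [Fintype σX]
    [Fintype σA] [Fintype σB] [Fintype σC] [DecidableEq σW] [DecidableEq σX]
    [DecidableEq σA] [DecidableEq σB] [DecidableEq σC]
    (P : Ω → ℝ) (hP : ∀ ω, 0 ≤ P ω) (hP1 : ∑ ω : Ω, P ω = 1)
    (W : Ω → σW) (X : Ω → σX) (A : Ω → σA) (B : Ω → σB) (C : Ω → σC) :
    rvCondEntropy P W (fun ω => (X ω, A ω, C ω))
        + rvCondEntropy P W (fun ω => (X ω, B ω, C ω))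
      ≥ rvCondEntropy P W (fun ω => (X ω, A ω, B ω, C ω))
        + rvCondEntropy P W (fun ω => (X ω, C ω))
        - rvCondMutualInfo P A B (fun ω => (X ω, C ω)) := by
  simp only [rvCondEntropy, rvCondMutualInfo, ge_iff_le]
  have h1 : rvEntropy P (fun ω => (W ω, X ω, A ω, C ω))
      = rvEntropy P (fun ω => (A ω, W ω, X ω, C ω)) :=
    rvEntropy_comp P (⟨fun p => (p.2.1, p.2.2.1, p.1, p.2.2.2), fun p => (p.2.2.1, p.1, p.2.1, p.2.2.2),
      fun ⟨_, _, _, _⟩ => rfl, fun ⟨_, _, _, _⟩ => rfl⟩) (fun ω => (A ω, W ω, X ω, C ω)) (fun ω => (W ω, X ω, A ω, C ω)) (fun ω => rfl)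
  have h2 : rvEntropy P (fun ω => (X ω, A ω, C ω))
      = rvEntropy P (fun ω => (A ω, X ω, C ω)) :=
    rvEntropy_comp P (⟨fun p => (p.2.1, p.1, p.2.2), fun p => (p.2.1, p.1, p.2.2),
      fun ⟨_, _, _⟩ => rfl, fun ⟨_, _, _⟩ => rfl⟩) (fun ω => (A ω, X ω, C ω)) (fun ω => (X ω, A ω, C ω)) (fun ω => rfl)
  have h3 : rvEntropy P (fun ω => (W ω, X ω, B ω, C ω))
      = rvEntropy P (fun ω => (B ω, W ω, X ω, C ω)) :=
    rvEntropy_comp P (⟨fun p => (p.2.1, p.2.2.1, p.1, p.2.2.2), fun p => (p.2.2.1, p.1, p.2.1, p.2.2.2),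
      fun ⟨_, _, _, _⟩ => rfl, fun ⟨_, _, _, _⟩ => rfl⟩) (fun ω => (B ω, W ω, X ω, C ω)) (fun ω => (W ω, X ω, B ω, C ω)) (fun ω => rfl)
  have h4 : rvEntropy P (fun ω => (X ω, B ω, C ω))
      = rvEntropy P (fun ω => (B ω, X ω, C ω)) :=
    rvEntropy_comp P (⟨fun p => (p.2.1, p.1, p.2.2), fun p => (p.2.1, p.1, p.2.2),
      fun ⟨_, _, _⟩ => rfl, fun ⟨_, _, _⟩ => rfl⟩) (fun ω => (B ω, X ω, C ω)) (fun ω => (X ω, B ω, C ω)) (fun ω => rfl)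
  have h5 : rvEntropy P (fun ω => (W ω, X ω, A ω, B ω, C ω))
      = rvEntropy P (fun ω => (A ω, B ω, W ω, X ω, C ω)) :=
    rvEntropy_comp P (⟨fun p => (p.2.2.1, p.2.2.2.1, p.1, p.2.1, p.2.2.2.2),
      fun p => (p.2.2.1, p.2.2.2.1, p.1, p.2.1, p.2.2.2.2),
      fun ⟨_, _, _, _, _⟩ => rfl, fun ⟨_, _, _, _, _⟩ => rfl⟩) (fun ω => (A ω, B ω, W ω, X ω, C ω)) (fun ω => (W ω, X ω, A ω, B ω, C ω)) (fun ω => rfl)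
  have h6 : rvEntropy P (fun ω => (X ω, A ω, B ω, C ω))
      = rvEntropy P (fun ω => ((A ω, B ω), X ω, C ω)) :=
    rvEntropy_comp P (⟨fun p => (p.2.1, p.1.1, p.1.2, p.2.2), fun p => ((p.2.1, p.2.2.1), p.1, p.2.2.2),
      fun ⟨⟨_, _⟩, _, _⟩ => rfl, fun ⟨_, _, _, _⟩ => rfl⟩) (fun ω => ((A ω, B ω), X ω, C ω)) (fun ω => (X ω, A ω, B ω, C ω)) (fun ω => rfl)
  have hs : rvEntropy P (fun ω => (A ω, B ω, W ω, X ω, C ω))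
        + rvEntropy P (fun ω => (W ω, X ω, C ω))
      ≤ rvEntropy P (fun ω => (A ω, W ω, X ω, C ω))
        + rvEntropy P (fun ω => (B ω, W ω, X ω, C ω)) :=
    rvSubmod P hP A B (fun ω => (W ω, X ω, C ω))
  linarith
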